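/- For all n ≥ 1, μ(n,2) = ⌈2n/3⌉, where μ(n,2) is the minimum over all n×n matrices W over 𝔽₂ with all diagonal entries 1 and each column having at most two nonzero entries, of the maximum over x ∈ 𝔽₂ⁿ of the Hamming weight of W·x. -/

import Mathlib

/-!
A matrix with unit diagonal and column weights at most two has at most one off-diagonal `1` per
column, so it is `1 + A` with `A` the adjacency matrix of the graph of a map `σ`: column `j` is
supported on `{j, σ j}`.

Upper bound: let `σ` cycle each of the `⌊n/3⌋` consecutive triples. The three rows of a triple
sum to zero, so each triple contains a zero row of `W x`, and `|W x| ≤ n - ⌊n/3⌋ = ⌈2n/3⌉`.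

Lower bound: build `x` by induction, peeling off a few vertices at a time and choosing `x` on
them without touching the rows that remain. If some vertex `r` has its edge leaving the
remaining set `V` (or no edge at all), a suitable `x r` makes row `r` nonzero. Otherwise, if
some `v` starts a path `v → u → w` of three distinct vertices, leave `x w = 0` and choose `x v`,
then `x u`, to make rows `v` and `u` nonzero. Otherwise `σ` is a fixed-point-free involution on
`V`, and `x = e v` makes both rows of the 2-cycle `{v, σ v}` nonzero. Each step makes at least
two thirds of the peeled rows nonzero.
-/

/-- `μ(n,m)`: minimum over matrices with unit diagonal and column weights `≤ m`
of `max_x |W·x|`. -/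
noncomputable def mu (n m : ℕ) : ℕ :=
  sInf {k : ℕ | ∃ W : Matrix (Fin n) (Fin n) (ZMod 2),
    (∀ i, W i i = 1) ∧ (∀ j, hammingNorm (fun i => W i j) ≤ m) ∧
    k = Finset.univ.sup fun x : Fin n → ZMod 2 => hammingNorm (W.mulVec x)}

open Finset Matrix

theorem Finset.card_filter_sdiff_add_card_filter {α : Type*} [DecidableEq α] {S V : Finset α}
    (p : α → Prop) [DecidablePred p] (hSV : S ⊆ V) :
    #{i ∈ V \ S | p i} + #{i ∈ S | p i} = #{i ∈ V | p i} := by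
  rw [← card_union_of_disjoint (disjoint_filter_filter sdiff_disjoint), ← filter_union,
    sdiff_union_of_subset hSV]

theorem ZMod.exists_eq_zero_of_sum_eq_zero_of_odd {ι : Type*} {T : Finset ι} (hT : Odd #T)
    {v : ι → ZMod 2} (hv : ∑ i ∈ T, v i = 0) : ∃ i ∈ T, v i = 0 := by
  by_contra! h
  have hsum : ∑ i ∈ T, v i = #T := by
    rw [cast_card]
    exact sum_congr rfl fun i hi => Fin.eq_one_of_ne_zero _ (h i hi)
  rw [hsum, ZMod.natCast_eq_one_iff_odd.2 hT] at hv
  exact one_ne_zero hv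

namespace FunGraph

variable {α : Type*} [DecidableEq α]

def funGraphMatrix (σ : α → α) : Matrix α α (ZMod 2) :=
  Matrix.of fun i j => if i = j ∨ i = σ j then 1 else 0

variable [Fintype α]

theorem diag_eq_one_and_hammingNorm_col_le_two_iff (W : Matrix α α (ZMod 2)) :
    ((∀ i, W i i = 1) ∧ ∀ j, hammingNorm (fun i => W i j) ≤ 2) ↔
      ∃ σ : α → α, W = funGraphMatrix σ := by
  constructor
  · rintro ⟨hdiag, hcol⟩
    have hsucc : ∀ j, ∃ k, ∀ i ≠ j, W i j ≠ 0 ↔ i = k := by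
      intro j
      by_cases h : ∃ k ≠ j, W k j ≠ 0
      · obtain ⟨k, hkj, hk⟩ := h
        refine ⟨k, fun i hij => ⟨fun hi => ?_, fun hik => hik ▸ hk⟩⟩
        by_contra hik
        have hsub : ({i, k, j} : Finset α) ⊆ univ.filter (W · j ≠ 0) := by
          simp [insert_subset_iff, hi, hk, hdiag]
        have := card_le_card hsub
        rw [card_insert_of_notMem (by simp [hik, hij]), card_pair hkj] at this
        exact absurd (hcol j) (by simp only [hammingNorm]; omega)
      · push Not at h
        exact ⟨j, fun i hij => by simp [h i hij, hij]⟩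
    choose σ hσ using hsucc
    refine ⟨σ, Matrix.ext fun i j => ?_⟩
    simp only [funGraphMatrix, of_apply]
    by_cases hij : i = j
    · subst hij
      simp [hdiag]
    · rw [if_congr (or_iff_right hij) rfl rfl]
      split_ifs with h
      · exact Fin.eq_one_of_ne_zero _ ((hσ j i hij).2 h)
      · exact not_not.1 (mt (hσ j i hij).1 h)
  · rintro ⟨σ, rfl⟩
    refine ⟨fun i => by simp [funGraphMatrix], fun j => ?_⟩
    calc #{i | funGraphMatrix σ i j ≠ 0} ≤ #({j, σ j} : Finset α) :=
          card_le_card fun i => by simp [funGraphMatrix]; tauto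
      _ ≤ 2 := card_le_two

variable (σ : α → α)

theorem funGraphMatrix_mulVec_single (j : α) (c : ZMod 2) (i : α) :
    (funGraphMatrix σ *ᵥ Pi.single j c) i = if i = j ∨ i = σ j then c else 0 := by
  rw [mulVec_single]
  simp only [funGraphMatrix, Pi.smul_apply, col_apply, of_apply, MulOpposite.smul_eq_mul_unop,
    MulOpposite.unop_op]
  split_ifs <;> simp

theorem funGraphMatrix_mulVec_eq_zero {x : α → ZMod 2} {i : α} (hi : x i = 0)
    (hpre : ∀ j, σ j = i → x j = 0) : (funGraphMatrix σ *ᵥ x) i = 0 := by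
  refine sum_eq_zero fun j _ => ?_
  simp only [funGraphMatrix, of_apply]
  split_ifs with h
  · rcases h with rfl | rfl
    · rw [hi, mul_zero]
    · rw [hpre j rfl, mul_zero]
  · rw [zero_mul]

theorem sum_funGraphMatrix_mulVec_eq_zero {T : Finset α} (hT : ∀ j, σ j ∈ T ↔ j ∈ T)
    (hfix : ∀ j ∈ T, σ j ≠ j) (x : α → ZMod 2) :
    ∑ i ∈ T, (funGraphMatrix σ *ᵥ x) i = 0 := by
  have hcol : ∀ j, ∑ i ∈ T, funGraphMatrix σ i j = 0 := by
    intro j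
    simp only [funGraphMatrix, of_apply, sum_boole]
    by_cases hj : j ∈ T
    · have : {i ∈ T | i = j ∨ i = σ j} = {j, σ j} := by
        ext i
        simp only [mem_filter, mem_insert, mem_singleton]
        constructor
        · exact And.right
        · rintro (rfl | rfl) <;> simp_all
      rw [this, card_pair (hfix j hj).symm]
      rfl
    · have : {i ∈ T | i = j ∨ i = σ j} = ∅ := by
        refine filter_false_of_mem fun i hi => ?_
        rintro (rfl | rfl)
        exacts [hj hi, hj ((hT j).1 hi)]
      rw [this, card_empty, Nat.cast_zero]
  simp only [mulVec, dotProduct]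
  rw [sum_comm]
  exact sum_eq_zero fun j _ => by rw [← sum_mul, hcol j, zero_mul]

def Peelable (V S : Finset α) : Prop :=
  ∀ x : α → ZMod 2, (∀ j ∉ V \ S, x j = 0) → ∃ y : α → ZMod 2, (∀ j ∉ S, y j = 0) ∧
    (∀ i ∈ V \ S, (funGraphMatrix σ *ᵥ y) i = 0) ∧
    2 * #S ≤ 3 * #{i ∈ S | (funGraphMatrix σ *ᵥ (x + y)) i ≠ 0}

variable {σ} {V : Finset α}

theorem peelable_root {r : α} (hr : σ r = r ∨ σ r ∉ V) : Peelable σ V {r} := by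
  intro x _
  set c := 1 - (funGraphMatrix σ *ᵥ x) r
  refine ⟨Pi.single r c, fun j hj => Pi.single_eq_of_ne (by simpa using hj) _, ?_, ?_⟩
  · intro i hi
    obtain ⟨hiV, hir⟩ := mem_sdiff.1 hi
    rw [mem_singleton] at hir
    rw [funGraphMatrix_mulVec_single, if_neg]
    rintro (rfl | rfl)
    · exact hir rfl
    · exact hr.elim hir fun h => h hiV
  · have : {i ∈ ({r} : Finset α) | (funGraphMatrix σ *ᵥ (x + Pi.single r c)) i ≠ 0} = {r} := by
      rw [filter_singleton, if_pos]
      rw [mulVec_add, Pi.add_apply, funGraphMatrix_mulVec_single, if_pos (Or.inl rfl),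
        add_sub_cancel]
      exact one_ne_zero
    simp [this]

theorem peelable_path {v : α} (hvu : σ v ≠ v) (hwu : σ (σ v) ≠ σ v) (hwv : σ (σ v) ≠ v) :
    Peelable σ V {v, σ v, σ (σ v)} := by
  set u := σ v
  set w := σ u
  intro x _
  set a := 1 - (funGraphMatrix σ *ᵥ x) v
  set b := 1 - ((funGraphMatrix σ *ᵥ x) u + a)
  have hy : ∀ i, (funGraphMatrix σ *ᵥ (Pi.single v a + Pi.single u b)) i =
      (if i = v ∨ i = u then a else 0) + (if i = u ∨ i = w then b else 0) := by
    intro i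
    rw [mulVec_add, Pi.add_apply, funGraphMatrix_mulVec_single, funGraphMatrix_mulVec_single]
  refine ⟨Pi.single v a + Pi.single u b, fun j hj => ?_, fun i hi => ?_, ?_⟩
  · simp only [mem_insert, mem_singleton, not_or] at hj
    simp [hj.1, hj.2.1]
  · simp only [mem_sdiff, mem_insert, mem_singleton, not_or] at hi
    simp [hy, hi.2.1, hi.2.2.1, hi.2.2.2]
  · have hsub : ({v, u} : Finset α) ⊆ ({v, u, w} : Finset α).filter
        fun i => (funGraphMatrix σ *ᵥ (x + (Pi.single v a + Pi.single u b))) i ≠ 0 := by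
      intro i hi
      rw [mem_insert, mem_singleton] at hi
      rw [mem_filter, mulVec_add, Pi.add_apply, hy]
      rcases hi with rfl | rfl
      · simp [hvu.symm, hwv.symm, a]
      · simp [← add_assoc, b]
    have h3 : #({v, u, w} : Finset α) ≤ 3 := card_le_three
    have h2 : #({v, u} : Finset α) = 2 := card_pair hvu.symm
    have := card_le_card hsub
    omega

theorem peelable_pair {v : α} (hpre : ∀ j ∈ V \ {v, σ v}, σ j ≠ v ∧ σ j ≠ σ v) :
    Peelable σ V {v, σ v} := by
  intro x hx
  have hrow : ∀ i ∈ ({v, σ v} : Finset α), (funGraphMatrix σ *ᵥ x) i = 0 := by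
    intro i hi
    refine funGraphMatrix_mulVec_eq_zero σ (hx i fun h => (mem_sdiff.1 h).2 hi)
      fun j hj => hx j fun hjV => ?_
    rw [mem_insert, mem_singleton] at hi
    rcases hi with rfl | rfl
    · exact (hpre j hjV).1 hj
    · exact (hpre j hjV).2 hj
  refine ⟨Pi.single v 1, fun j hj => Pi.single_eq_of_ne (by simp_all) _, fun i hi => ?_, ?_⟩
  · rw [funGraphMatrix_mulVec_single, if_neg]
    simpa using (mem_sdiff.1 hi).2
  · have : ({v, σ v} : Finset α).filter
        (fun i => (funGraphMatrix σ *ᵥ (x + Pi.single v 1)) i ≠ 0) = {v, σ v} := by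
      refine filter_true_of_mem fun i hi => ?_
      rw [mulVec_add, Pi.add_apply, hrow i hi, funGraphMatrix_mulVec_single,
        if_pos (by simpa using hi), zero_add]
      exact one_ne_zero
    rw [this]
    omega

theorem exists_peelable (hV : V.Nonempty) : ∃ S ⊆ V, S.Nonempty ∧ Peelable σ V S := by
  by_cases hroot : ∃ r ∈ V, σ r = r ∨ σ r ∉ V
  · obtain ⟨r, hrV, hr⟩ := hroot
    exact ⟨{r}, singleton_subset_iff.2 hrV, singleton_nonempty r, peelable_root hr⟩
  push Not at hroot
  by_cases hpath : ∃ v ∈ V, σ (σ v) ≠ v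
  · obtain ⟨v, hvV, hwv⟩ := hpath
    have huV := (hroot v hvV).2
    refine ⟨{v, σ v, σ (σ v)}, ?_, insert_nonempty _ _,
      peelable_path (hroot v hvV).1 (hroot _ huV).1 hwv⟩
    simp [insert_subset_iff, hvV, huV, (hroot _ huV).2]
  push Not at hpath
  obtain ⟨v, hvV⟩ := hV
  refine ⟨{v, σ v}, by simp [insert_subset_iff, hvV, (hroot v hvV).2], insert_nonempty _ _,
    peelable_pair fun j hj => ⟨fun h => ?_, fun h => ?_⟩⟩ <;>
  · obtain ⟨hjV, hjS⟩ := mem_sdiff.1 hj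
    refine hjS ?_
    have := hpath j hjV
    simp_all

variable (σ) in
theorem exists_two_mul_card_le_three_mul_card_filter (V : Finset α) :
    ∃ x : α → ZMod 2, (∀ j ∉ V, x j = 0) ∧
      2 * #V ≤ 3 * #{i ∈ V | (funGraphMatrix σ *ᵥ x) i ≠ 0} := by
  induction V using Finset.strongInduction with
  | H V ih =>
    rcases V.eq_empty_or_nonempty with rfl | hV
    · exact ⟨0, fun _ _ => rfl, by simp⟩
    obtain ⟨S, hSV, hS, hpeel⟩ := exists_peelable (σ := σ) hV
    obtain ⟨x, hx, hcount⟩ := ih (V \ S) (sdiff_ssubset hSV hS)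
    obtain ⟨y, hy, hleak, hgain⟩ := hpeel x hx
    refine ⟨x + y, fun j hj => ?_, ?_⟩
    · rw [Pi.add_apply, hx j (fun h => hj (mem_sdiff.1 h).1), hy j (fun h => hj (hSV h)),
        add_zero]
    have hsame : {i ∈ V \ S | (funGraphMatrix σ *ᵥ (x + y)) i ≠ 0} =
        {i ∈ V \ S | (funGraphMatrix σ *ᵥ x) i ≠ 0} :=
      filter_congr fun i hi => by rw [mulVec_add, Pi.add_apply, hleak i hi, add_zero]
    rw [← card_filter_sdiff_add_card_filter _ hSV, hsame, ← card_sdiff_add_card_eq_card hSV]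
    omega

theorem exists_two_mul_card_le_three_mul_hammingNorm (W : Matrix α α (ZMod 2))
    (hdiag : ∀ i, W i i = 1) (hcol : ∀ j, hammingNorm (fun i => W i j) ≤ 2) :
    ∃ x : α → ZMod 2, 2 * Fintype.card α ≤ 3 * hammingNorm (W *ᵥ x) := by
  obtain ⟨σ, rfl⟩ := (diag_eq_one_and_hammingNorm_col_le_two_iff W).1 ⟨hdiag, hcol⟩
  obtain ⟨x, -, hx⟩ := exists_two_mul_card_le_three_mul_card_filter σ univ
  exact ⟨x, hx⟩

def blockCycle (n : ℕ) (j : Fin n) : Fin n :=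
  if h : 3 * (j / 3) + 3 ≤ n then ⟨3 * (j / 3) + (j % 3 + 1) % 3, by omega⟩ else j

variable {n : ℕ}

theorem blockCycle_div_three (j : Fin n) : (blockCycle n j : ℕ) / 3 = j / 3 := by
  unfold blockCycle
  split_ifs
  · simp only
    omega
  · rfl

theorem blockCycle_ne (j : Fin n) (hj : 3 * (j / 3) + 3 ≤ n) : blockCycle n j ≠ j := by
  rw [blockCycle, dif_pos hj, ne_eq, Fin.ext_iff, Fin.val_mk]
  omega

def block (n b : ℕ) : Finset (Fin n) := {i | (i : ℕ) / 3 = b}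

theorem card_block {b : ℕ} (hb : b < n / 3) : #(block n b) = 3 := by
  have : (block n b).map Fin.valEmbedding = Ico (3 * b) (3 * b + 3) := by
    ext i
    simp only [block, mem_map, mem_filter, mem_univ, true_and, Fin.valEmbedding_apply, mem_Ico]
    constructor
    · rintro ⟨j, hj, rfl⟩
      omega
    · intro hi
      exact ⟨⟨i, by omega⟩, by simp only; omega, rfl⟩
  rw [← card_map, this, Nat.card_Ico]
  omega

theorem exists_blockCycle_mulVec_eq_zero (x : Fin n → ZMod 2) {b : ℕ} (hb : b < n / 3) :
    ∃ i : Fin n, (i : ℕ) / 3 = b ∧ (funGraphMatrix (blockCycle n) *ᵥ x) i = 0 := by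
  have hsum : ∑ i ∈ block n b, (funGraphMatrix (blockCycle n) *ᵥ x) i = 0 := by
    refine sum_funGraphMatrix_mulVec_eq_zero _ (fun j => ?_) (fun j hj => ?_) x
    · simp [block, blockCycle_div_three]
    · refine blockCycle_ne j ?_
      simp only [block, mem_filter, mem_univ, true_and] at hj
      omega
  obtain ⟨i, hi, hzero⟩ :=
    ZMod.exists_eq_zero_of_sum_eq_zero_of_odd (by rw [card_block hb]; decide) hsum
  exact ⟨i, by simpa [block] using hi, hzero⟩

theorem hammingNorm_blockCycle_mulVec_le (x : Fin n → ZMod 2) :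
    hammingNorm (funGraphMatrix (blockCycle n) *ᵥ x) ≤ n - n / 3 := by
  have hzeros : n / 3 ≤ #{i | (funGraphMatrix (blockCycle n) *ᵥ x) i = 0} := by
    calc n / 3 = #(range (n / 3)) := (card_range _).symm
      _ ≤ #(image (fun i : Fin n => (i : ℕ) / 3)
            {i | (funGraphMatrix (blockCycle n) *ᵥ x) i = 0}) :=
          card_le_card fun b hb => by
            obtain ⟨i, hib, hi⟩ := exists_blockCycle_mulVec_eq_zero x (mem_range.1 hb)
            exact mem_image.2 ⟨i, by simpa using hi, hib⟩
      _ ≤ _ := card_image_le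
  have hsplit := card_filter_add_card_filter_not (s := (univ : Finset (Fin n)))
    (fun i => (funGraphMatrix (blockCycle n) *ᵥ x) i ≠ 0)
  simp only [not_not, card_univ, Fintype.card_fin] at hsplit
  unfold hammingNorm
  omega

end FunGraph

open FunGraph in
theorem mu_n_two_general (n : ℕ) : mu n 2 = (2 * n + 2) / 3 := by
  have hlower : ∀ W : Matrix (Fin n) (Fin n) (ZMod 2), (∀ i, W i i = 1) →
      (∀ j, hammingNorm (fun i => W i j) ≤ 2) →
      (2 * n + 2) / 3 ≤ univ.sup fun x => hammingNorm (W *ᵥ x) := by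
    intro W hdiag hcol
    obtain ⟨x, hx⟩ := exists_two_mul_card_le_three_mul_hammingNorm W hdiag hcol
    rw [Fintype.card_fin] at hx
    exact le_trans (by omega) (le_sup (f := fun x => hammingNorm (W *ᵥ x)) (mem_univ x))
  obtain ⟨hdiag₀, hcol₀⟩ :=
    (diag_eq_one_and_hammingNorm_col_le_two_iff (funGraphMatrix (blockCycle n))).2 ⟨_, rfl⟩
  unfold mu
  apply le_antisymm
  · refine Nat.sInf_le ⟨_, hdiag₀, hcol₀, le_antisymm (hlower _ hdiag₀ hcol₀) ?_⟩
    exact Finset.sup_le fun x _ => (hammingNorm_blockCycle_mulVec_le x).trans (by omega)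
  · refine le_csInf ⟨_, _, hdiag₀, hcol₀, rfl⟩ ?_
    rintro k ⟨W, hdiag, hcol, rfl⟩
    exact hlower W hdiag hcol

/-- `μ(n,2) = ⌈2n/3⌉`. -/
theorem mu_n_two (n : ℕ) (hn : 1 ≤ n) : mu n 2 = (2 * n + 2) / 3 :=
  mu_n_two_general n
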